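/- Let H be a subgroup of G = Sym(ℕ) such that all but finitely many orbits of H on ℕ are finite and uniformly bounded (i.e., there exist m ∈ ℕ and finitely many orbits outside of which every orbit has at most m elements). If H with the topology induced by τ is strongly FSIN, then this topology on H is discrete. Moreover, if H has only finitely many orbits and H with the topology τ₀ of pointwise convergence is strongly FSIN, then H is a closed discrete subgroup of (G, τ₀). -/

import Mathlib

/-- The Samuel (precompact) uniformity on `ℕ`: a basis of entourages is given by the sets
`⋃ i, A i × A i` for `{A 1, …, A n}` a finite partition of `ℕ`; equivalently, it is the
infimum of the uniformities pulled back from finite discrete uniform spaces, a basis being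
given by the sets `{(x, y) | c x = c y}` for `c : ℕ → Fin n`. -/
noncomputable def samuelNat : UniformSpace ℕ :=
  ⨅ (n : ℕ) (c : ℕ → Fin n), UniformSpace.comap c ⊥

/-- The topology `τ` on `G = Sym(ℕ)`: the topology of uniform convergence when the target `ℕ`
carries the Samuel uniformity.  A basis of neighborhoods of the identity is given by the
subgroups `H_π = {g : g (A i) = A i, i = 1, …, n}`, `π = {A 1, …, A n}` a finite partition
of `ℕ`. -/
noncomputable def tauPerm : TopologicalSpace (Equiv.Perm ℕ) :=
  TopologicalSpace.induced (fun g => UniformFun.ofFun (⇑g))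
    (@UniformFun.uniformSpace ℕ ℕ samuelNat).toTopologicalSpace

/-- The subgroup `S` of finitary permutations of `ℕ`, i.e. those moving only finitely many
points. -/
def finitaryS : Subgroup (Equiv.Perm ℕ) where
  carrier := {g | {x | g x ≠ x}.Finite}
  one_mem' := by simp
  mul_mem' := by
    intro a b ha hb
    refine (ha.union hb).subset fun x hx => ?_
    by_cases h : b x = x
    · exact Or.inl (by simpa [Equiv.Perm.mul_apply, h] using hx)
    · exact Or.inr h
  inv_mem' := by
    intro a ha
    have h : {x | a⁻¹ x ≠ x} = {x | a x ≠ x} := by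
      ext x
      simp only [Set.mem_setOf_eq, ne_eq, Equiv.Perm.inv_eq_iff_eq]
      exact not_congr eq_comm
    show {x | a⁻¹ x ≠ x}.Finite
    rw [h]; exact ha

/-- The natural Polish topology `τ₀` on `Sym(ℕ)`: the topology of pointwise convergence,
`ℕ` being discrete. -/
def tauZero : TopologicalSpace (Equiv.Perm ℕ) :=
  TopologicalSpace.induced (fun g => (⇑g : ℕ → ℕ))
    (@Pi.topologicalSpace ℕ (fun _ => ℕ) (fun _ => ⊥))

/-- Right uniform continuity of `f : G → Y`: a basis of the right uniformity of a topological
group `G` is given by the sets `{(g, h) : g * h⁻¹ ∈ U}`, `U` a neighborhood of the identity. -/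
def RightUC {G : Type*} [Group G] (t : TopologicalSpace G) {Y : Type*} [UniformSpace Y]
    (f : G → Y) : Prop :=
  ∀ V ∈ uniformity Y, ∃ U ∈ @nhds G t 1, ∀ g h : G, g * h⁻¹ ∈ U → (f g, f h) ∈ V

/-- Left uniform continuity of `f : G → Y`: a basis of the left uniformity of a topological
group `G` is given by the sets `{(g, h) : g⁻¹ * h ∈ U}`, `U` a neighborhood of the identity. -/
def LeftUC {G : Type*} [Group G] (t : TopologicalSpace G) {Y : Type*} [UniformSpace Y]
    (f : G → Y) : Prop :=
  ∀ V ∈ uniformity Y, ∃ U ∈ @nhds G t 1, ∀ g h : G, g⁻¹ * h ∈ U → (f g, f h) ∈ V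

/-- `f : G → Y` is right proximally continuous: for every bounded uniformly continuous
`φ : Y → ℝ`, the composition `φ ∘ f` is right uniformly continuous. -/
def RightProxCont {G : Type*} [Group G] (t : TopologicalSpace G) {Y : Type*} [UniformSpace Y]
    (f : G → Y) : Prop :=
  ∀ φ : Y → ℝ, UniformContinuous φ → (∃ C, ∀ y, |φ y| ≤ C) → RightUC t (φ ∘ f)

/-- A topological group is strongly FSIN if every (not necessarily bounded) left uniformly
continuous real-valued function on it is right uniformly continuous. -/
def StronglyFSIN {G : Type*} [Group G] (t : TopologicalSpace G) : Prop :=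
  ∀ f : G → ℝ, LeftUC t f → RightUC t f

/-!
Let `A` be a set of representatives of the orbits of `H`, and `V` an open subgroup of `H`
mapping `A` into itself: for `τ` the setwise stabiliser of `A` (`H_π` for `π = {A, ℕ \ A}`),
for `τ₀` the pointwise stabiliser of `A`, which is open when `A` is finite. For each `x` pick
`g_x ∈ H` with `g_x x ∈ A`. Numbering the cosets `g_x⁻¹ V` by distinct positive integers (and
the other cosets by `0`) gives a function constant on left cosets of `V`, hence left uniformly
continuous; its right uniform continuity yields a neighbourhood `U` of `1` with
`g_x u g_x⁻¹ ∈ V` for all `u ∈ U` and all `x`. Then `g_x u x ∈ A` lies in the orbit of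
`g_x x ∈ A`, so `u x = x`: hence `U = {1}` and `H` is discrete. For `τ₀` this makes some
`{u ∈ H | u fixes T}` with `T` finite trivial, and a limit `g` of `H` agrees on `T ∪ {x}` with
elements of `H`, which all coincide; so `g ∈ H`.
-/

open Filter Topology MulAction
open scoped Pointwise

section Transversal

variable {G α : Type*} [Group G] [MulAction G α]

theorem MulAction.exists_smul_mem_range_out (x : α) :
    ∃ g : G, g • x ∈ Set.range (Quotient.out : orbitRel.Quotient G α → α) := by
  obtain ⟨g, hg⟩ := mem_orbit_iff.1 (orbitRel_apply.1 (Quotient.mk_out (s := orbitRel G α) x))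
  exact ⟨g, hg ▸ Set.mem_range_self _⟩

theorem MulAction.eq_of_mem_range_out_of_mem_orbit {a b : α}
    (ha : a ∈ Set.range (Quotient.out : orbitRel.Quotient G α → α))
    (hb : b ∈ Set.range (Quotient.out : orbitRel.Quotient G α → α)) (hab : b ∈ orbit G a) :
    b = a := by
  obtain ⟨p, rfl⟩ := ha
  obtain ⟨q, rfl⟩ := hb
  rw [← Quotient.out_eq p, ← Quotient.out_eq q, Quotient.sound (orbitRel_apply.2 hab)]

theorem MulAction.finite_range_out {F : Finset α} (hF : ∀ x, ∃ k ∈ F, x ∈ orbit G k) :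
    (Set.range (Quotient.out : orbitRel.Quotient G α → α)).Finite := by
  have : Finite (orbitRel.Quotient G α) := by
    refine Finite.of_surjective (fun k : F => (⟦k⟧ : orbitRel.Quotient G α)) ?_
    refine Quotient.ind fun x => ?_
    obtain ⟨k, hk, hx⟩ := hF x
    exact ⟨⟨k, hk⟩, Quotient.sound (orbitRel_apply.2 (mem_orbit_symm.1 hx))⟩
  exact Set.finite_range _

theorem MulAction.eq_one_of_forall_conj_mem_stabilizer [FaithfulSMul G α] {A : Set α}
    (hA : ∀ a ∈ A, ∀ b ∈ A, b ∈ orbit G a → b = a) (s : α → G) (hs : ∀ x, s x • x ∈ A) {u : G}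
    (hu : ∀ x, s x * u * (s x)⁻¹ ∈ stabilizer G A) : u = 1 := by
  refine eq_of_smul_eq_smul (α := α) fun x => ?_
  have hmem : (s x * u * (s x)⁻¹) • s x • x ∈ A := by
    rw [← mem_stabilizer_iff.1 (hu x)]
    exact Set.smul_mem_smul_set (hs x)
  have horb : (s x * u * (s x)⁻¹) • s x • x ∈ orbit G (s x • x) := mem_orbit _ _
  simpa [mul_smul] using hA _ (hs x) _ hmem horb

end Transversal

section StronglyFSIN

variable {G : Type*} [Group G] {t : TopologicalSpace G}

theorem StronglyFSIN.exists_nhds_one_forall_conj_mem {ι : Type*} [Countable ι]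
    (hG : StronglyFSIN t) {V : Subgroup G} (hV : (V : Set G) ∈ @nhds G t 1) (s : ι → G) :
    ∃ U ∈ @nhds G t 1, ∀ u ∈ U, ∀ i, (s i)⁻¹ * u * s i ∈ V := by
  classical
  obtain ⟨e, he⟩ := Countable.exists_injective_nat ι
  let φ : G ⧸ V → ℕ := fun q => if h : ∃ i, (s i : G ⧸ V) = q then e h.choose + 1 else 0
  have hφ : ∀ q i, φ q = φ (s i) → q = s i := by
    intro q i hq
    have hi : ∃ j, (s j : G ⧸ V) = s i := ⟨i, rfl⟩
    by_cases h : ∃ j, (s j : G ⧸ V) = q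
    · simp only [φ, dif_pos h, dif_pos hi, add_left_inj] at hq
      rw [← h.choose_spec, ← hi.choose_spec, he hq]
    · simp [φ, dif_neg h, dif_pos hi] at hq
  have hleft : LeftUC t fun g : G => (φ g : ℝ) := by
    refine fun W hW => ⟨V, hV, fun g h hgh => ?_⟩
    rw [SetLike.mem_coe, ← QuotientGroup.eq] at hgh
    simpa only [hgh] using refl_mem_uniformity hW
  obtain ⟨U, hU, hUφ⟩ := hG _ hleft _ (Metric.dist_mem_uniformity one_pos)
  refine ⟨U, hU, fun u hu i => ?_⟩
  have hdist : dist (φ (u * s i)) (φ (s i)) < 1 := hUφ (u * s i) (s i) (by simpa using hu)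
  have hφeq : φ (u * s i) = φ (s i) :=
    of_not_not fun hne => (Nat.pairwise_one_le_dist hne).not_gt hdist
  simpa [mul_assoc] using QuotientGroup.eq.1 (hφ _ _ hφeq).symm

theorem StronglyFSIN.singleton_one_mem_nhds {α : Type*} [MulAction G α] [FaithfulSMul G α]
    [Countable α] (hG : StronglyFSIN t)
    (hV : (stabilizer G (Set.range (Quotient.out : orbitRel.Quotient G α → α)) : Set G) ∈
      @nhds G t 1) :
    ({1} : Set G) ∈ @nhds G t 1 := by
  choose s hs using exists_smul_mem_range_out (G := G) (α := α)
  obtain ⟨U, hU, hUconj⟩ := hG.exists_nhds_one_forall_conj_mem hV fun x => (s x)⁻¹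
  refine mem_of_superset hU fun u hu => eq_one_of_forall_conj_mem_stabilizer
    (fun a ha b hb => eq_of_mem_range_out_of_mem_orbit ha hb) s hs fun x => ?_
  simpa using hUconj u hu x

end StronglyFSIN

theorem eq_bot_of_singleton_one_mem_nhds {G : Type*} [Group G] {t : TopologicalSpace G}
    (ht : ∀ k : G, Continuous[t, t] (· * k)) (h1 : ({1} : Set G) ∈ @nhds G t 1) : t = ⊥ := by
  have hopen : IsOpen[t] {1} := isOpen_iff_mem_nhds.2 fun g hg => hg ▸ h1
  refine eq_bot_of_singletons_open fun g => ?_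
  simpa [Set.preimage, mul_inv_eq_one] using (ht g⁻¹).isOpen_preimage _ hopen

theorem Subgroup.continuous_mul_right_induced {G : Type*} [Group G] {t : TopologicalSpace G}
    (ht : ∀ k : G, Continuous[t, t] (· * k)) (H : Subgroup G) (k : H) :
    Continuous[t.induced (↑), t.induced (↑)] (· * k) :=
  continuous_induced_rng.2 ((ht k).comp continuous_induced_dom)

theorem mem_uniformity_samuelNat {n : ℕ} (c : ℕ → Fin n) :
    {p : ℕ × ℕ | c p.1 = c p.2} ∈ @uniformity ℕ samuelNat := by
  rw [samuelNat, iInf_uniformity]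
  refine mem_iInf_of_mem n ?_
  rw [iInf_uniformity]
  refine mem_iInf_of_mem c ?_
  rw [uniformity_comap, bot_uniformity, comap_principal]
  exact mem_principal_self _

theorem mem_nhds_one_tauPerm {n : ℕ} (c : ℕ → Fin n) :
    {g : Equiv.Perm ℕ | ∀ x, c (g x) = c x} ∈ @nhds _ tauPerm 1 := by
  let _ := samuelNat
  rw [tauPerm, nhds_induced]
  exact mem_of_superset (preimage_mem_comap ((UniformFun.hasBasis_nhds ℕ ℕ _).mem_of_mem
    (mem_uniformity_samuelNat c))) fun g hg x => (hg x).symm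

theorem continuous_mul_right_tauPerm (k : Equiv.Perm ℕ) : Continuous[tauPerm, tauPerm] (· * k) :=
  let _ := samuelNat
  let _ := tauPerm
  continuous_induced_rng.2
    ((UniformFun.precomp_uniformContinuous (f := k)).continuous.comp continuous_induced_dom)

theorem stabilizer_mem_nhds_induced_tauPerm (H : Subgroup (Equiv.Perm ℕ)) (A : Set ℕ) :
    (stabilizer H A : Set H) ∈ @nhds H (tauPerm.induced (↑)) 1 := by
  classical
  rw [@nhds_induced _ _ tauPerm]
  refine mem_of_superset (preimage_mem_comap
    (mem_nhds_one_tauPerm fun x => if x ∈ A then (0 : Fin 2) else 1)) fun g hg => ?_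
  have hgA : ∀ x, (g : Equiv.Perm ℕ) x ∈ A ↔ x ∈ A := fun x => by
    have := hg x
    split_ifs at this <;> simp_all
  rw [SetLike.mem_coe, mem_stabilizer_iff]
  ext y
  rw [Set.mem_smul_set_iff_inv_smul_mem, ← hgA]
  simp [Subgroup.smul_def]

theorem hasBasis_nhds_tauZero (g : Equiv.Perm ℕ) :
    (@nhds _ tauZero g).HasBasis (fun T : Set ℕ => T.Finite)
      fun T => {h | ∀ x ∈ T, h x = g x} := by
  have hnhds : @nhds _ tauZero g = comap (⇑) (pi fun x => pure (g x)) := by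
    simp only [← nhds_discrete ℕ, ← nhds_pi]
    exact nhds_induced _ _
  rw [hnhds]
  exact ((hasBasis_pi fun x => hasBasis_pure (g x)).comap _).to_hasBasis
    (fun I hI => ⟨I.1, hI.1, fun h hh x hx => hh x hx⟩)
    (fun T hT => ⟨(T, fun _ => ()), ⟨hT, fun _ _ => trivial⟩, fun h hh x hx => hh x hx⟩)

theorem hasBasis_nhds_one_induced_tauZero (H : Subgroup (Equiv.Perm ℕ)) :
    (@nhds H (tauZero.induced (↑)) 1).HasBasis (fun T : Set ℕ => T.Finite)
      fun T => (fixingSubgroup H T : Set H) := by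
  rw [@nhds_induced _ _ tauZero]
  refine ((hasBasis_nhds_tauZero 1).comap _).congr (fun _ => Iff.rfl) fun T _ => ?_
  ext h
  simp [mem_fixingSubgroup_iff, Subgroup.smul_def]

theorem continuous_mul_right_tauZero (k : Equiv.Perm ℕ) : Continuous[tauZero, tauZero] (· * k) :=
  let _ := tauZero
  continuous_induced_rng.2
    (continuous_pi fun x => (continuous_apply (k x)).comp continuous_induced_dom)

theorem isClosed_tauZero_of_fixingSubgroup_eq_bot {H : Subgroup (Equiv.Perm ℕ)} {T : Set ℕ}
    (hT : T.Finite) (hfix : fixingSubgroup H T = ⊥) :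
    IsClosed[tauZero] (H : Set (Equiv.Perm ℕ)) := by
  let _ := tauZero
  refine isClosed_of_closure_subset fun g hg => ?_
  have happrox : ∀ S : Set ℕ, S.Finite → ∃ h ∈ H, ∀ x ∈ S, h x = g x :=
    (mem_closure_iff_nhds_basis (hasBasis_nhds_tauZero g)).1 hg
  obtain ⟨h, hH, hhg⟩ := happrox T hT
  suffices ∀ x, h x = g x from Equiv.ext this ▸ hH
  intro x
  obtain ⟨h', hH', hh'g⟩ := happrox (insert x T) (hT.insert x)
  have hfixT : (⟨h⁻¹ * h', H.mul_mem (H.inv_mem hH) hH'⟩ : H) ∈ fixingSubgroup H T := by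
    refine (mem_fixingSubgroup_iff H).2 fun y hy => ?_
    simp [Subgroup.smul_def, hh'g y (Set.mem_insert_of_mem x hy), ← hhg y hy]
  rw [hfix, Subgroup.mem_bot, Subtype.ext_iff, Subgroup.coe_mk, Subgroup.coe_one,
    inv_mul_eq_one] at hfixT
  rw [hfixT]
  exact hh'g x (Set.mem_insert x T)

theorem stmt_18_general (H : Subgroup (Equiv.Perm ℕ)) :
    (StronglyFSIN (TopologicalSpace.induced (Subtype.val : ↥H → Equiv.Perm ℕ) tauPerm) →
      TopologicalSpace.induced (Subtype.val : ↥H → Equiv.Perm ℕ) tauPerm = ⊥) ∧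
    ((∃ F' : Finset ℕ, ∀ x : ℕ, ∃ k ∈ F', x ∈ MulAction.orbit ↥H k) →
      StronglyFSIN (TopologicalSpace.induced (Subtype.val : ↥H → Equiv.Perm ℕ) tauZero) →
      @IsClosed (Equiv.Perm ℕ) tauZero (H : Set (Equiv.Perm ℕ)) ∧
        TopologicalSpace.induced (Subtype.val : ↥H → Equiv.Perm ℕ) tauZero = ⊥) := by
  refine ⟨fun hFSIN => ?_, fun ⟨F', hF'⟩ hFSIN => ?_⟩
  · exact eq_bot_of_singleton_one_mem_nhds
      (H.continuous_mul_right_induced continuous_mul_right_tauPerm)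
      (hFSIN.singleton_one_mem_nhds (stabilizer_mem_nhds_induced_tauPerm H _))
  · have hbasis := hasBasis_nhds_one_induced_tauZero H
    have h1 := hFSIN.singleton_one_mem_nhds <| mem_of_superset
      (hbasis.mem_of_mem (finite_range_out hF')) (fixingSubgroup_le_stabilizer _ _)
    obtain ⟨T, hT, hTsub⟩ := hbasis.mem_iff.1 h1
    have hbot : fixingSubgroup H T = ⊥ :=
      eq_bot_iff.2 fun u hu => Subgroup.mem_bot.2 (hTsub hu)
    exact ⟨isClosed_tauZero_of_fixingSubgroup_eq_bot hT hbot, eq_bot_of_singleton_one_mem_nhds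
      (H.continuous_mul_right_induced continuous_mul_right_tauZero) h1⟩

/-- Corollary 3.5: let `H ≤ G = Sym(ℕ)` be a subgroup all of whose orbits, apart from the
orbits of the points of a finite set `F`, have at most `m` elements.  (1) If `H` with the
topology induced by `τ` is strongly FSIN, then this topology is discrete.  (2) Moreover, if
`H` has only finitely many orbits and `H` with the topology induced by the pointwise
convergence topology `τ₀` is strongly FSIN, then `H` is a closed discrete subgroup of
`(G, τ₀)`. -/
theorem stmt_18 (H : Subgroup (Equiv.Perm ℕ)) (m : ℕ) (F : Finset ℕ)
    (horb : ∀ x : ℕ, (∀ k ∈ F, x ∉ MulAction.orbit ↥H k) →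
      Cardinal.mk ↥(MulAction.orbit ↥H x) ≤ (m : Cardinal)) :
    (StronglyFSIN (TopologicalSpace.induced (Subtype.val : ↥H → Equiv.Perm ℕ) tauPerm) →
      TopologicalSpace.induced (Subtype.val : ↥H → Equiv.Perm ℕ) tauPerm = ⊥) ∧
    ((∃ F' : Finset ℕ, ∀ x : ℕ, ∃ k ∈ F', x ∈ MulAction.orbit ↥H k) →
      StronglyFSIN (TopologicalSpace.induced (Subtype.val : ↥H → Equiv.Perm ℕ) tauZero) →
      @IsClosed (Equiv.Perm ℕ) tauZero (H : Set (Equiv.Perm ℕ)) ∧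
        TopologicalSpace.induced (Subtype.val : ↥H → Equiv.Perm ℕ) tauZero = ⊥) :=
  stmt_18_general H
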